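/- Let s ∈ ℝ, σ > 0, and 0 < δ' < δ. Then for every f in the Gevrey space G^δ_{σ,s}(ℝ), the derivative satisfies ‖∂_x f‖_{G^{δ'}_{σ,s}} ≤ (e^{-σ} σ^σ / (δ - δ')^σ) · ‖f‖_{G^δ_{σ,s}}, where ‖f‖_{G^δ_{σ,s}} = ( ∫ (1+|ξ|^2)^s e^{2δ(1+|ξ|^2)^{1/(2σ)}} |f̂(ξ)|^2 dξ )^{1/2}. -/

import Mathlib

/-!
The derivative multiplies `f̂` by `iξ`, so the estimate reduces to the pointwise multiplier bound
`|ξ| e^{δ' Λ} ≤ C e^{δ Λ}` with `Λ = (1 + |ξ|²)^{1/(2σ)}` and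
`C = e^{-σ} σ^σ / (δ - δ')^σ`. Since `|ξ| ≤ Λ^σ`, it suffices that
`Λ^σ e^{-(δ - δ') Λ} ≤ C`, and the maximum of `u ↦ u^σ e^{-u}` is `σ^σ e^{-σ}`, attained at `u = σ`.
-/

open MeasureTheory

/-- The Gevrey norm `‖f‖_{G^δ_{σ,s}}`, expressed through the Fourier transform `f̂` of `f`
(with the convention that the Fourier transform of `∂ₓ f` is `ξ ↦ i ξ f̂(ξ)`). -/
noncomputable def gevreyNorm (δ σ s : ℝ) (fhat : ℝ → ℂ) : ℝ :=
  (∫ ξ : ℝ, (1 + |ξ| ^ 2) ^ s * Real.exp (2 * δ * (1 + |ξ| ^ 2) ^ (1 / (2 * σ))) *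
      ‖fhat ξ‖ ^ 2) ^ ((1 : ℝ) / 2)

theorem rpow_le_exp_neg_mul_rpow_mul_exp {σ u : ℝ} (hσ : 0 < σ) (hu : 0 ≤ u) :
    u ^ σ ≤ Real.exp (-σ) * σ ^ σ * Real.exp u := by
  have hlin : u / σ ≤ Real.exp (u / σ - 1) := by linarith [Real.add_one_le_exp (u / σ - 1)]
  have hpow := Real.rpow_le_rpow (div_nonneg hu hσ.le) hlin hσ.le
  rw [Real.div_rpow hu hσ.le, ← Real.exp_mul, div_le_iff₀ (by positivity)] at hpow
  calc u ^ σ ≤ Real.exp ((u / σ - 1) * σ) * σ ^ σ := hpow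
    _ = Real.exp (-σ) * σ ^ σ * Real.exp u := by
      rw [show (u / σ - 1) * σ = -σ + u by field_simp; ring, Real.exp_add]; ring

theorem rpow_le_mul_exp_mul {σ a Λ : ℝ} (hσ : 0 < σ) (ha : 0 < a) (hΛ : 0 ≤ Λ) :
    Λ ^ σ ≤ Real.exp (-σ) * σ ^ σ / a ^ σ * Real.exp (a * Λ) := by
  have h := rpow_le_exp_neg_mul_rpow_mul_exp hσ (mul_nonneg ha.le hΛ)
  rw [Real.mul_rpow ha.le hΛ] at h
  rw [div_mul_eq_mul_div, le_div_iff₀ (by positivity)]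
  linarith

theorem abs_le_rpow_one_add_sq_rpow {σ : ℝ} (hσ : σ ≠ 0) (ξ : ℝ) :
    |ξ| ≤ ((1 + |ξ| ^ 2) ^ (1 / (2 * σ))) ^ σ := by
  rw [← Real.rpow_mul (by positivity), show 1 / (2 * σ) * σ = 1 / 2 by field_simp,
    ← Real.sqrt_eq_rpow]
  exact Real.abs_le_sqrt (by rw [sq_abs]; linarith)

theorem abs_mul_exp_le_mul_exp {σ δ δ' : ℝ} (hσ : 0 < σ) (hδ : δ' < δ) (ξ : ℝ) :
    |ξ| * Real.exp (δ' * (1 + |ξ| ^ 2) ^ (1 / (2 * σ))) ≤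
      Real.exp (-σ) * σ ^ σ / (δ - δ') ^ σ * Real.exp (δ * (1 + |ξ| ^ 2) ^ (1 / (2 * σ))) := by
  set Λ := (1 + |ξ| ^ 2) ^ (1 / (2 * σ))
  have hΛ : |ξ| ≤ Real.exp (-σ) * σ ^ σ / (δ - δ') ^ σ * Real.exp ((δ - δ') * Λ) :=
    (abs_le_rpow_one_add_sq_rpow hσ.ne' ξ).trans
      (rpow_le_mul_exp_mul hσ (sub_pos.2 hδ) (by positivity))
  calc |ξ| * Real.exp (δ' * Λ)
      ≤ Real.exp (-σ) * σ ^ σ / (δ - δ') ^ σ * Real.exp ((δ - δ') * Λ) * Real.exp (δ' * Λ) := by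
        gcongr
    _ = Real.exp (-σ) * σ ^ σ / (δ - δ') ^ σ * Real.exp (δ * Λ) := by
        rw [mul_assoc, ← Real.exp_add]; ring_nf

theorem gevrey_integrand_deriv_le {s σ δ δ' : ℝ} (hσ : 0 < σ) (hδ : δ' < δ) (ξ : ℝ) (z : ℂ) :
    (1 + |ξ| ^ 2) ^ s * Real.exp (2 * δ' * (1 + |ξ| ^ 2) ^ (1 / (2 * σ))) *
        ‖Complex.I * (ξ : ℂ) * z‖ ^ 2 ≤
      (Real.exp (-σ) * σ ^ σ / (δ - δ') ^ σ) ^ 2 *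
        ((1 + |ξ| ^ 2) ^ s * Real.exp (2 * δ * (1 + |ξ| ^ 2) ^ (1 / (2 * σ))) * ‖z‖ ^ 2) := by
  set Λ := (1 + |ξ| ^ 2) ^ (1 / (2 * σ))
  have hexp (a : ℝ) : Real.exp (2 * a * Λ) = Real.exp (a * Λ) ^ 2 := by
    rw [sq, ← Real.exp_add]; ring_nf
  have hnorm : ‖Complex.I * (ξ : ℂ) * z‖ = |ξ| * ‖z‖ := by simp
  have hmult := abs_mul_exp_le_mul_exp hσ hδ ξ
  calc (1 + |ξ| ^ 2) ^ s * Real.exp (2 * δ' * Λ) * ‖Complex.I * (ξ : ℂ) * z‖ ^ 2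
      = (1 + |ξ| ^ 2) ^ s * ‖z‖ ^ 2 * (|ξ| * Real.exp (δ' * Λ)) ^ 2 := by
        rw [hnorm, hexp]; ring
    _ ≤ (1 + |ξ| ^ 2) ^ s * ‖z‖ ^ 2 *
        (Real.exp (-σ) * σ ^ σ / (δ - δ') ^ σ * Real.exp (δ * Λ)) ^ 2 := by
        gcongr
    _ = _ := by rw [hexp]; ring

theorem sqrt_integral_le_mul_sqrt_integral {α : Type*} [MeasurableSpace α] {μ : Measure α}
    {f g : α → ℝ} {C : ℝ} (hC : 0 ≤ C) (hg : ∀ x, 0 ≤ g x) (hgf : ∀ x, g x ≤ C ^ 2 * f x)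
    (hf : Integrable f μ) :
    Real.sqrt (∫ x, g x ∂μ) ≤ C * Real.sqrt (∫ x, f x ∂μ) := by
  have hint : ∫ x, g x ∂μ ≤ C ^ 2 * ∫ x, f x ∂μ := by
    rw [← integral_const_mul]
    exact integral_mono_of_nonneg (.of_forall hg) (hf.const_mul _) (.of_forall hgf)
  calc Real.sqrt (∫ x, g x ∂μ) ≤ Real.sqrt (C ^ 2 * ∫ x, f x ∂μ) := Real.sqrt_le_sqrt hint
    _ = C * Real.sqrt (∫ x, f x ∂μ) := by rw [Real.sqrt_mul (sq_nonneg C), Real.sqrt_sq hC]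

theorem gevrey_gradient_estimate_general (s σ δ δ' : ℝ) (hσ : 0 < σ) (hδ : δ' < δ)
    (fhat : ℝ → ℂ)
    (hint : Integrable (fun ξ : ℝ => (1 + |ξ| ^ 2) ^ s *
      Real.exp (2 * δ * (1 + |ξ| ^ 2) ^ (1 / (2 * σ))) * ‖fhat ξ‖ ^ 2)) :
    gevreyNorm δ' σ s (fun ξ => Complex.I * (ξ : ℂ) * fhat ξ) ≤
      Real.exp (-σ) * σ ^ σ / (δ - δ') ^ σ * gevreyNorm δ σ s fhat := by
  simp only [gevreyNorm, ← Real.sqrt_eq_rpow]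
  exact sqrt_integral_le_mul_sqrt_integral (by positivity) (fun ξ => by positivity)
    (fun ξ => gevrey_integrand_deriv_le hσ hδ ξ (fhat ξ)) hint

theorem gevrey_gradient_estimate (s σ δ δ' : ℝ) (hσ : 0 < σ) (hδ' : 0 < δ') (hδ : δ' < δ)
    (fhat : ℝ → ℂ)
    (hint : Integrable (fun ξ : ℝ => (1 + |ξ| ^ 2) ^ s *
      Real.exp (2 * δ * (1 + |ξ| ^ 2) ^ (1 / (2 * σ))) * ‖fhat ξ‖ ^ 2)) :
    gevreyNorm δ' σ s (fun ξ => Complex.I * (ξ : ℂ) * fhat ξ) ≤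
      Real.exp (-σ) * σ ^ σ / (δ - δ') ^ σ * gevreyNorm δ σ s fhat :=
  gevrey_gradient_estimate_general s σ δ δ' hσ hδ fhat hint
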